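/- For a pure bipartite state |φ⟩^{AB}, the one-way distillable common randomness quantity D¹_→(φ^{AB}) = max_Λ I(X;B) over rank-1 POVMs Λ on A equals the entanglement entropy H(A)_φ. -/

import Mathlib

open Matrix Kronecker BigOperators ComplexOrder

/-- Trace norm `‖A‖₁ = Tr √(Aᴴ A)`. -/
noncomputable def traceNorm {n : Type*} [Fintype n] [DecidableEq n]
    (A : Matrix n n ℂ) : ℝ :=
  (((Matrix.posSemidef_conjTranspose_mul_self A).1.eigenvectorUnitary.1 *
      diagonal (((↑) : ℝ → ℂ) ∘ Real.sqrt ∘ (Matrix.posSemidef_conjTranspose_mul_self A).1.eigenvalues) *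
      (star (Matrix.posSemidef_conjTranspose_mul_self A).1.eigenvectorUnitary : Matrix n n ℂ)).trace).re

/-- Von Neumann entropy (base 2), via eigenvalues; `0` for non-Hermitian input. -/
noncomputable def vnEntropy {n : Type*} [Fintype n] [DecidableEq n]
    (ρ : Matrix n n ℂ) : ℝ :=
  if h : ρ.IsHermitian then
    -∑ i, (h.eigenvalues i) * Real.logb 2 (h.eigenvalues i)
  else 0

/-- A density operator: positive semidefinite with unit trace. -/
def IsDensity {n : Type*} [Fintype n] (ρ : Matrix n n ℂ) : Prop :=
  ρ.PosSemidef ∧ ρ.trace = 1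

/-- Rank-one projector `|v⟩⟨v|`. -/
noncomputable def proj {n : Type*} (v : n → ℂ) : Matrix n n ℂ :=
  Matrix.vecMulVec v (star v)

/-- Partial trace over the second tensor factor. -/
noncomputable def ptraceSnd {a b : Type*} [Fintype b]
    (ρ : Matrix (a × b) (a × b) ℂ) : Matrix a a ℂ :=
  Matrix.of fun i j => ∑ k, ρ (i, k) (j, k)

/-- Partial trace over the first tensor factor. -/
noncomputable def ptraceFst {a b : Type*} [Fintype a]
    (ρ : Matrix (a × b) (a × b) ℂ) : Matrix b b ℂ :=
  Matrix.of fun i j => ∑ k, ρ (k, i) (k, j)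

/-- Quantum mutual information `I(A;B) = H(A) + H(B) − H(AB)`. -/
noncomputable def mutualInfo {a b : Type*} [Fintype a] [Fintype b]
    [DecidableEq a] [DecidableEq b] (ρ : Matrix (a × b) (a × b) ℂ) : ℝ :=
  vnEntropy (ptraceSnd ρ) + vnEntropy (ptraceFst ρ) - vnEntropy ρ

/-- `n`-fold tensor power of a matrix. -/
noncomputable def tpow {d : ℕ} (ρ : Matrix (Fin d) (Fin d) ℂ) (n : ℕ) :
    Matrix (Fin n → Fin d) (Fin n → Fin d) ℂ :=
  Matrix.of fun f g => ∏ i, ρ (f i) (g i)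

/-- The cq state obtained by measuring the `A` part of a bipartite state with POVM `Λ`:
`ρ^{XB} = Σ_x |x⟩⟨x| ⊗ Tr_A((Λ_x ⊗ I)ρ)`. -/
noncomputable def measureA {a b m : Type*} [Fintype a] [DecidableEq m]
    (Λ : m → Matrix a a ℂ) (ρ : Matrix (a × b) (a × b) ℂ) :
    Matrix (m × b) (m × b) ℂ :=
  Matrix.of fun xi yj =>
    if xi.1 = yj.1 then ∑ k, ∑ l, (Λ xi.1) k l * ρ (l, xi.2) (k, yj.2) else 0

/-- Unitarity for (possibly rectangular between index types) matrices. -/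
def IsUnitaryMat {p q : Type*} [Fintype p] [Fintype q] [DecidableEq p] [DecidableEq q]
    (U : Matrix p q ℂ) : Prop :=
  U * Uᴴ = 1 ∧ Uᴴ * U = 1

/-!
Write `φ` as the coefficient matrix `M`, so that `ρ^A = M Mᴴ` and `ρ^B = (Mᴴ M)ᵀ`. Since `M Mᴴ` and
`Mᴴ M` have the same nonzero spectrum, `H(A) = H(B)`. Measuring `A` with a rank-one POVM
`Λ_x = |φ_x⟩⟨φ_x|` leaves `ρ^B` unchanged and produces `ρ^{XB} = K Kᴴ` with column `x` of `K` equal to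
`|x⟩ ⊗ ψ_x`, where `ψ_x = ⟨φ_x|φ⟩`; then `ρ^X = Kᴴ K`, so `H(X) = H(XB)` and
`I(X;B) = H(B) = H(A)` for every such POVM.
-/

open Polynomial

/-- Zero roots contribute nothing, which is what makes `A * Aᴴ` and `Aᴴ * A` comparable. -/
noncomputable def rootEntropy (p : ℂ[X]) : ℝ :=
  -(p.roots.map fun z : ℂ => z.re * Real.logb 2 z.re).sum

lemma rootEntropy_X_pow_mul (k : ℕ) {p : ℂ[X]} (hp : p ≠ 0) :
    rootEntropy (X ^ k * p) = rootEntropy p := by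
  rw [rootEntropy, rootEntropy, roots_mul (mul_ne_zero (pow_ne_zero _ X_ne_zero) hp),
    roots_pow, roots_X]
  simp [Multiset.nsmul_singleton]

lemma vnEntropy_eq_rootEntropy_charpoly {n : Type*} [Fintype n] [DecidableEq n]
    {H : Matrix n n ℂ} (hH : H.IsHermitian) : vnEntropy H = rootEntropy H.charpoly := by
  rw [vnEntropy, dif_pos hH, rootEntropy, hH.roots_charpoly_eq_eigenvalues, Multiset.map_map,
    Finset.sum_map_val]
  simp

lemma vnEntropy_mul_conjTranspose_self {p q : Type*} [Fintype p] [Fintype q]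
    [DecidableEq p] [DecidableEq q] (A : Matrix p q ℂ) :
    vnEntropy (A * Aᴴ) = vnEntropy (Aᴴ * A) := by
  rw [vnEntropy_eq_rootEntropy_charpoly (isHermitian_mul_conjTranspose_self A),
    vnEntropy_eq_rootEntropy_charpoly (isHermitian_conjTranspose_mul_self A),
    ← rootEntropy_X_pow_mul (Fintype.card q) (charpoly_monic _).ne_zero,
    charpoly_mul_comm', rootEntropy_X_pow_mul _ (charpoly_monic _).ne_zero]

lemma vnEntropy_transpose {n : Type*} [Fintype n] [DecidableEq n] (H : Matrix n n ℂ) :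
    vnEntropy Hᵀ = vnEntropy H := by
  by_cases hH : H.IsHermitian
  · rw [vnEntropy_eq_rootEntropy_charpoly hH.transpose, vnEntropy_eq_rootEntropy_charpoly hH,
      charpoly_transpose]
  · have hHt : ¬ Hᵀ.IsHermitian := fun h => hH (by simpa using h.transpose)
    rw [vnEntropy, vnEntropy, dif_neg hH, dif_neg hHt]

lemma ptraceSnd_proj {α β : Type*} [Fintype β] (φ : α × β → ℂ) :
    ptraceSnd (proj φ) = of (Function.curry φ) * (of (Function.curry φ))ᴴ := by
  ext i j
  simp [ptraceSnd, proj, vecMulVec_apply, mul_apply]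

lemma ptraceFst_proj {α β : Type*} [Fintype α] (φ : α × β → ℂ) :
    ptraceFst (proj φ) = ((of (Function.curry φ))ᴴ * of (Function.curry φ))ᵀ := by
  ext i j
  simp [ptraceFst, proj, vecMulVec_apply, mul_apply, mul_comm]

lemma vnEntropy_ptraceFst_proj {α β : Type*} [Fintype α] [Fintype β] [DecidableEq α]
    [DecidableEq β] (φ : α × β → ℂ) :
    vnEntropy (ptraceFst (proj φ)) = vnEntropy (ptraceSnd (proj φ)) := by
  rw [ptraceFst_proj, ptraceSnd_proj, vnEntropy_transpose, vnEntropy_mul_conjTranspose_self]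

lemma ptraceFst_measureA {α β m : Type*} [Fintype α] [Fintype m] [DecidableEq α] [DecidableEq m]
    {Λ : m → Matrix α α ℂ} (hΛ : ∑ x, Λ x = 1) (ρ : Matrix (α × β) (α × β) ℂ) :
    ptraceFst (measureA Λ ρ) = ptraceFst ρ := by
  ext i j
  have hΛ' : ∀ k l, ∑ x, Λ x k l = (1 : Matrix α α ℂ) k l := fun k l => by
    rw [← hΛ, Matrix.sum_apply]
  simp only [ptraceFst, measureA, of_apply, if_true]
  calc ∑ x, ∑ k, ∑ l, Λ x k l * ρ (l, i) (k, j)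
      = ∑ k, ∑ l, (∑ x, Λ x k l) * ρ (l, i) (k, j) := by
        simp only [Finset.sum_mul]
        rw [Finset.sum_comm]
        exact Finset.sum_congr rfl fun _ _ => Finset.sum_comm
    _ = ∑ k, ρ (k, i) (k, j) := by
        simp [hΛ', one_apply]

/-- Column `x` is `|x⟩ ⊗ ψ x`, so `K * Kᴴ = Σ_x |x⟩⟨x| ⊗ |ψ x⟩⟨ψ x|` for `K = cqFactor ψ`. -/
def cqFactor {m β : Type*} [DecidableEq m] (ψ : m → β → ℂ) : Matrix (m × β) m ℂ :=
  of fun p y => if p.1 = y then ψ p.1 p.2 else 0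

lemma ptraceSnd_cqFactor_mul_conjTranspose {m β : Type*} [Fintype m] [Fintype β] [DecidableEq m]
    (ψ : m → β → ℂ) :
    ptraceSnd (cqFactor ψ * (cqFactor ψ)ᴴ) = (cqFactor ψ)ᴴ * cqFactor ψ := by
  ext x y
  by_cases hxy : x = y
  · subst hxy
    simp [ptraceSnd, cqFactor, mul_apply, Fintype.sum_prod_type, mul_comm]
  · simp [ptraceSnd, cqFactor, mul_apply, Fintype.sum_prod_type, Ne.symm hxy]

lemma mutualInfo_cqFactor_mul_conjTranspose {m β : Type*} [Fintype m] [Fintype β]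
    [DecidableEq m] [DecidableEq β] (ψ : m → β → ℂ) :
    mutualInfo (cqFactor ψ * (cqFactor ψ)ᴴ)
      = vnEntropy (ptraceFst (cqFactor ψ * (cqFactor ψ)ᴴ)) := by
  rw [mutualInfo, ptraceSnd_cqFactor_mul_conjTranspose, vnEntropy_mul_conjTranspose_self,
    add_sub_cancel_left]

lemma measureA_proj_proj {α β m : Type*} [Fintype α] [Fintype m] [DecidableEq m]
    (φs : m → α → ℂ) (φ : α × β → ℂ) :
    measureA (fun x => proj (φs x)) (proj φ)
      = cqFactor (fun x => star (φs x) ᵥ* of (Function.curry φ)) *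
          (cqFactor (fun x => star (φs x) ᵥ* of (Function.curry φ)))ᴴ := by
  ext ⟨x, i⟩ ⟨y, j⟩
  by_cases hxy : x = y
  · subst hxy
    simp only [measureA, proj, vecMulVec_apply, Pi.star_apply, RCLike.star_def, of_apply,
      ↓reduceIte, cqFactor, vecMul, dotProduct, Function.curry_apply, mul_apply,
      conjTranspose_apply, ite_mul, zero_mul, Finset.sum_ite_eq, Finset.mem_univ, map_sum, map_mul,
      RingHomCompTriple.comp_apply, RingHom.id_apply, Finset.sum_mul_sum]
    rw [Finset.sum_comm]
    exact Finset.sum_congr rfl fun _ _ => Finset.sum_congr rfl fun _ _ => by ring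
  · simp [measureA, cqFactor, mul_apply, hxy, Ne.symm hxy]

lemma mutualInfo_measureA_proj {α β m : Type*} [Fintype α] [Fintype β] [Fintype m]
    [DecidableEq α] [DecidableEq β] [DecidableEq m] {φs : m → α → ℂ}
    (hφs : ∑ x, proj (φs x) = 1) (φ : α × β → ℂ) :
    mutualInfo (measureA (fun x => proj (φs x)) (proj φ)) = vnEntropy (ptraceSnd (proj φ)) := by
  rw [← vnEntropy_ptraceFst_proj, ← ptraceFst_measureA hφs, measureA_proj_proj,
    mutualInfo_cqFactor_mul_conjTranspose]

lemma sum_proj_single {α : Type*} [Fintype α] [DecidableEq α] :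
    ∑ x : α, proj (Pi.single x (1 : ℂ)) = 1 := by
  ext i j
  simp [proj, Matrix.sum_apply, vecMulVec_apply, Pi.single_apply, one_apply]

theorem dcr_of_pure_state_general {a b : ℕ} (φ : Fin a × Fin b → ℂ) :
    IsGreatest {r : ℝ | ∃ (m : ℕ) (φs : Fin m → Fin a → ℂ),
        (∑ x, proj (φs x)) = 1 ∧
        r = mutualInfo (measureA (fun x => proj (φs x)) (proj φ))}
      (vnEntropy (ptraceSnd (proj φ))) := by
  refine ⟨⟨a, fun x => Pi.single x 1, sum_proj_single,
    (mutualInfo_measureA_proj sum_proj_single φ).symm⟩, ?_⟩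
  rintro r ⟨m, φs, hφs, rfl⟩
  exact (mutualInfo_measureA_proj hφs φ).le

theorem dcr_of_pure_state {a b : ℕ} (φ : Fin a × Fin b → ℂ) (hφ : star φ ⬝ᵥ φ = 1) :
    IsGreatest {r : ℝ | ∃ (m : ℕ) (φs : Fin m → Fin a → ℂ),
        (∑ x, proj (φs x)) = 1 ∧
        r = mutualInfo (measureA (fun x => proj (φs x)) (proj φ))}
      (vnEntropy (ptraceSnd (proj φ))) :=
  dcr_of_pure_state_general φ
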